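/- Let d ≥ 1, let X and Y be independent ℝ^d-valued random variables each with density f with respect to Lebesgue measure, let H be an invertible d×d real matrix, let K : ℝ^d → ℝ be bounded, measurable and compactly supported, and let ρ : ℝ^d → ℝ be bounded and measurable. Then for all x, t ∈ ℝ^d, E[K_H(X − x) · K_H(Y − t) · ρ(X − Y)] = ∫∫_{ℝ^d×ℝ^d} K(p) K(q) ρ(x − t + H(p − q)) f(x + Hp) f(t + Hq) dp dq. -/

import Mathlib

open MeasureTheory ProbabilityTheory Filter
open scoped ENNReal NNReal Topology

noncomputable section

/-- The rescaled kernel `K_H(v) = |det H|⁻¹ * K (H⁻¹ v)`. -/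
def kernelScaled {d : ℕ} (H : Matrix (Fin d) (Fin d) ℝ) (K : (Fin d → ℝ) → ℝ)
    (v : Fin d → ℝ) : ℝ :=
  |H.det|⁻¹ * K (H⁻¹.mulVec v)

/-!
Independence turns the expectation into an integral against the product of the two laws, and
the densities turn that into a Lebesgue double integral `∫∫ f(u) f(v) g(u, v) du dv`. The affine
substitutions `u = x + H p`, `v = t + H q` each produce a Jacobian factor `|det H|`, which
cancels one of the two normalising factors `|det H|⁻¹` of `K_H`.
-/

theorem ProbabilityTheory.IndepFun.integral_comp_eq_integral_integral
    {Ω α β E : Type*} [MeasurableSpace Ω] [MeasurableSpace α] [MeasurableSpace β]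
    [NormedAddCommGroup E] [NormedSpace ℝ E] {μ : Measure Ω} [IsFiniteMeasure μ]
    {X : Ω → α} {Y : Ω → β} (hXY : IndepFun X Y μ) (hX : AEMeasurable X μ)
    (hY : AEMeasurable Y μ) {G : α → β → E}
    (hG : Integrable (Function.uncurry G) ((μ.map X).prod (μ.map Y))) :
    ∫ ω, G (X ω) (Y ω) ∂μ = ∫ u, ∫ v, G u v ∂(μ.map Y) ∂(μ.map X) := by
  have hmap := (indepFun_iff_map_prod_eq_prod_map_map hX hY).1 hXY
  calc ∫ ω, G (X ω) (Y ω) ∂μ = ∫ z, Function.uncurry G z ∂(μ.map fun ω => (X ω, Y ω)) :=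
        (integral_map (hX.prodMk hY) (hmap ▸ hG.aestronglyMeasurable)).symm
    _ = _ := by rw [hmap]; exact integral_prod _ hG

theorem integral_withDensity_ofReal {α : Type*} [MeasurableSpace α] {μ : Measure α}
    {f : α → ℝ} (hf : Measurable f) (hf0 : 0 ≤ᵐ[μ] f) (g : α → ℝ) :
    ∫ x, g x ∂μ.withDensity (fun x => ENNReal.ofReal (f x)) = ∫ x, f x * g x ∂μ := by
  rw [integral_withDensity_eq_integral_toReal_smul hf.ennreal_ofReal
    (ae_of_all _ fun _ => ENNReal.ofReal_lt_top)]
  refine integral_congr_ae ?_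
  filter_upwards [hf0] with x hx
  rw [ENNReal.toReal_ofReal hx, smul_eq_mul]

theorem integral_eq_abs_det_mul_integral_comp_affine {ι E : Type*} [Fintype ι] [DecidableEq ι]
    [NormedAddCommGroup E] [NormedSpace ℝ E] {H : Matrix ι ι ℝ} (hH : H.det ≠ 0)
    (a : ι → ℝ) (F : (ι → ℝ) → E) :
    ∫ u, F u = |H.det| • ∫ p, F (a + H.mulVec p) := by
  have hemb : MeasurableEmbedding (Matrix.toLin' H) :=
    (LinearMap.isClosedEmbedding_of_injective (LinearMap.ker_eq_bot.2
      (Matrix.mulVec_injective_of_det_ne_zero hH))).measurableEmbedding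
  have hmap := hemb.integral_map (μ := volume) (fun u => F (a + u))
  simp only [Matrix.toLin'_apply] at hmap
  rw [← hmap, Real.map_matrix_volume_pi_eq_smul_volume_pi hH, integral_smul_measure,
    integral_add_left_eq_self, ENNReal.toReal_ofReal (by positivity), abs_inv, smul_smul,
    mul_inv_cancel₀ (abs_ne_zero.2 hH), one_smul]

theorem integral_integral_eq_abs_det_sq_smul_comp_affine {ι E : Type*} [Fintype ι]
    [DecidableEq ι] [NormedAddCommGroup E] [NormedSpace ℝ E] {H : Matrix ι ι ℝ}
    (hH : H.det ≠ 0) (a b : ι → ℝ) (F : (ι → ℝ) → (ι → ℝ) → E) :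
    ∫ u, ∫ v, F u v = (|H.det| ^ 2) • ∫ p, ∫ q, F (a + H.mulVec p) (b + H.mulVec q) := by
  rw [integral_eq_abs_det_mul_integral_comp_affine hH a, sq, mul_smul]
  congr 1
  rw [← integral_smul]
  congr 1 with p
  exact integral_eq_abs_det_mul_integral_comp_affine hH b _

section kernelScaled

variable {d : ℕ} {H : Matrix (Fin d) (Fin d) ℝ} {K : (Fin d → ℝ) → ℝ}

theorem measurable_kernelScaled (hK : Measurable K) : Measurable (kernelScaled H K) :=
  measurable_const.mul (hK.comp (continuous_const.matrix_mulVec continuous_id).measurable)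

theorem abs_kernelScaled_le {C : ℝ} (hK : ∀ u, |K u| ≤ C) (v : Fin d → ℝ) :
    |kernelScaled H K v| ≤ |H.det|⁻¹ * C := by
  rw [kernelScaled, abs_mul, abs_inv, abs_abs]
  exact mul_le_mul_of_nonneg_left (hK _) (by positivity)

theorem kernelScaled_mulVec (hH : H.det ≠ 0) (w : Fin d → ℝ) :
    kernelScaled H K (H.mulVec w) = |H.det|⁻¹ * K w := by
  rw [kernelScaled, Matrix.mulVec_mulVec, Matrix.nonsing_inv_mul H (isUnit_iff_ne_zero.2 hH),
    Matrix.one_mulVec]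

theorem integrable_kernelScaled_mul_kernelScaled_mul {ρ : (Fin d → ℝ) → ℝ}
    {ν : Measure ((Fin d → ℝ) × (Fin d → ℝ))} [IsFiniteMeasure ν] (hKmeas : Measurable K)
    (hKbd : ∃ C, ∀ u, |K u| ≤ C) (hρmeas : Measurable ρ) (hρbd : ∃ C, ∀ u, |ρ u| ≤ C)
    (x t : Fin d → ℝ) :
    Integrable (fun z => kernelScaled H K (z.1 - x) * kernelScaled H K (z.2 - t) *
      ρ (z.1 - z.2)) ν := by
  obtain ⟨CK, hCK⟩ := hKbd
  obtain ⟨Cρ, hCρ⟩ := hρbd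
  have hCK0 : 0 ≤ CK := (abs_nonneg _).trans (hCK 0)
  have hKH := measurable_kernelScaled (H := H) hKmeas
  refine .of_bound (by fun_prop) ((|H.det|⁻¹ * CK) * (|H.det|⁻¹ * CK) * Cρ)
    (ae_of_all _ fun z => ?_)
  simp only [Real.norm_eq_abs, abs_mul]
  gcongr
  · exact abs_kernelScaled_le hCK _
  · exact abs_kernelScaled_le hCK _
  · exact hCρ _

end kernelScaled

theorem expectation_W4n_general {d : ℕ}
    {Ω : Type*} [MeasurableSpace Ω] (μ : Measure Ω) [IsProbabilityMeasure μ]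
    (X Y : Ω → (Fin d → ℝ)) (hXmeas : Measurable X) (hYmeas : Measurable Y)
    (hindep : IndepFun X Y μ)
    (f : (Fin d → ℝ) → ℝ) (hfmeas : Measurable f) (hfnonneg : ∀ y, 0 ≤ f y)
    (hlawX : μ.map X = volume.withDensity (fun y => ENNReal.ofReal (f y)))
    (hlawY : μ.map Y = volume.withDensity (fun y => ENNReal.ofReal (f y)))
    (H : Matrix (Fin d) (Fin d) ℝ) (hH : H.det ≠ 0)
    (K : (Fin d → ℝ) → ℝ) (hKmeas : Measurable K) (hKbd : ∃ C, ∀ u, |K u| ≤ C)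
    (ρ : (Fin d → ℝ) → ℝ) (hρmeas : Measurable ρ) (hρbd : ∃ C, ∀ u, |ρ u| ≤ C)
    (x t : Fin d → ℝ) :
    ∫ ω, kernelScaled H K (X ω - x) * kernelScaled H K (Y ω - t) * ρ (X ω - Y ω) ∂μ =
      ∫ p, ∫ q, K p * K q * ρ (x - t + H.mulVec (p - q)) *
        f (x + H.mulVec p) * f (t + H.mulVec q) := by
  set G : (Fin d → ℝ) → (Fin d → ℝ) → ℝ := fun u v =>
    kernelScaled H K (u - x) * kernelScaled H K (v - t) * ρ (u - v)
  have hG : Integrable (Function.uncurry G) ((μ.map X).prod (μ.map Y)) :=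
    integrable_kernelScaled_mul_kernelScaled_mul hKmeas hKbd hρmeas hρbd x t
  have hdens := integral_withDensity_ofReal (μ := volume) hfmeas (ae_of_all _ hfnonneg)
  calc ∫ ω, G (X ω) (Y ω) ∂μ = ∫ u, ∫ v, G u v ∂(μ.map Y) ∂(μ.map X) :=
        hindep.integral_comp_eq_integral_integral hXmeas.aemeasurable hYmeas.aemeasurable hG
    _ = ∫ u, ∫ v, f u * (f v * G u v) := by
        simp only [hlawX, hlawY, hdens, integral_const_mul]
    _ = (|H.det| ^ 2) • ∫ p, ∫ q, f (x + H.mulVec p) * (f (t + H.mulVec q) *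
          G (x + H.mulVec p) (t + H.mulVec q)) :=
        integral_integral_eq_abs_det_sq_smul_comp_affine hH x t _
    _ = _ := by
        have hdet : |H.det| ≠ 0 := abs_ne_zero.2 hH
        rw [smul_eq_mul, ← integral_const_mul]
        congr 1 with p
        rw [← integral_const_mul]
        congr 1 with q
        have hsub : x + H.mulVec p - (t + H.mulVec q) = x - t + H.mulVec (p - q) := by
          rw [Matrix.mulVec_sub]; abel
        simp only [G, add_sub_cancel_left, hsub, kernelScaled_mulVec hH]
        field_simp

/-- Expectation computation in Lemma 4:
`E[K_H(X−x) K_H(Y−t) ρ(X−Y)]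
  = ∫∫ K(p) K(q) ρ(x−t+H(p−q)) f(x+Hp) f(t+Hq) dp dq`. -/
theorem expectation_W4n {d : ℕ} (hd : 1 ≤ d)
    {Ω : Type*} [MeasurableSpace Ω] (μ : Measure Ω) [IsProbabilityMeasure μ]
    (X Y : Ω → (Fin d → ℝ)) (hXmeas : Measurable X) (hYmeas : Measurable Y)
    (hindep : IndepFun X Y μ)
    (f : (Fin d → ℝ) → ℝ) (hfmeas : Measurable f) (hfnonneg : ∀ y, 0 ≤ f y)
    (hlawX : μ.map X = volume.withDensity (fun y => ENNReal.ofReal (f y)))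
    (hlawY : μ.map Y = volume.withDensity (fun y => ENNReal.ofReal (f y)))
    (H : Matrix (Fin d) (Fin d) ℝ) (hH : H.det ≠ 0)
    (K : (Fin d → ℝ) → ℝ) (hKmeas : Measurable K) (hKbd : ∃ C, ∀ u, |K u| ≤ C)
    (hKsupp : HasCompactSupport K)
    (ρ : (Fin d → ℝ) → ℝ) (hρmeas : Measurable ρ) (hρbd : ∃ C, ∀ u, |ρ u| ≤ C)
    (x t : Fin d → ℝ) :
    ∫ ω, kernelScaled H K (X ω - x) * kernelScaled H K (Y ω - t) * ρ (X ω - Y ω) ∂μ =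
      ∫ p, ∫ q, K p * K q * ρ (x - t + H.mulVec (p - q)) *
        f (x + H.mulVec p) * f (t + H.mulVec q) :=
  expectation_W4n_general μ X Y hXmeas hYmeas hindep f hfmeas hfnonneg hlawX hlawY H hH K hKmeas
    hKbd ρ hρmeas hρbd x t
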